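/- Fix θ, σ, t₀, t₁ ∈ ℂ and define, for ρ ∈ ℂ∖{0}: r₁(ρ) = −4i + iθ/ρ + 2iσ/ρ² − i(t₀+t₁)/(2ρ²) − iθ²/(8ρ²), r₂(ρ) = 4 − iθ/ρ + 2σ/ρ² − (t₀+t₁)/(2ρ²) − θ²/(8ρ²), r₁⁺(ρ) = 4i − iθ/ρ − 2iσ/ρ² − i(t₀−t₁)/(2ρ²) + iθ²/(8ρ²), r₂⁺(ρ) = 4i + θ/ρ + 2iσ/ρ² + i(t₀−t₁)/(2ρ²) − iθ²/(8ρ²). Then, as |ρ| → ∞, (r₁⁺(ρ)r₂(ρ) − r₂⁺(ρ)r₁(ρ)) / ( r₁'(ρ)r₂(ρ) − r₂'(ρ)r₁(ρ) + (1+i)·r₁(ρ)r₂(ρ) ) − ( −1 − i(t₀+θ)/(4ρ²) ) = O(ρ⁻³). -/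

import Mathlib

open Complex Filter Asymptotics

/-- `r₁(ρ) = −4i + iθ/ρ + 2iσ/ρ² − i(t₀+t₁)/(2ρ²) − iθ²/(8ρ²)`. -/
noncomputable def weightR1 (θ σ t₀ t₁ : ℂ) (ρ : ℂ) : ℂ :=
  -4 * Complex.I + Complex.I * θ / ρ + 2 * Complex.I * σ / ρ ^ 2
    - Complex.I * (t₀ + t₁) / (2 * ρ ^ 2) - Complex.I * θ ^ 2 / (8 * ρ ^ 2)

/-- `r₂(ρ) = 4 − iθ/ρ + 2σ/ρ² − (t₀+t₁)/(2ρ²) − θ²/(8ρ²)`. -/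
noncomputable def weightR2 (θ σ t₀ t₁ : ℂ) (ρ : ℂ) : ℂ :=
  4 - Complex.I * θ / ρ + 2 * σ / ρ ^ 2 - (t₀ + t₁) / (2 * ρ ^ 2) - θ ^ 2 / (8 * ρ ^ 2)

/-- `r₁⁺(ρ) = 4i − iθ/ρ − 2iσ/ρ² − i(t₀−t₁)/(2ρ²) + iθ²/(8ρ²)`. -/
noncomputable def weightR1p (θ σ t₀ t₁ : ℂ) (ρ : ℂ) : ℂ :=
  4 * Complex.I - Complex.I * θ / ρ - 2 * Complex.I * σ / ρ ^ 2
    - Complex.I * (t₀ - t₁) / (2 * ρ ^ 2) + Complex.I * θ ^ 2 / (8 * ρ ^ 2)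

/-- `r₂⁺(ρ) = 4i + θ/ρ + 2iσ/ρ² + i(t₀−t₁)/(2ρ²) − iθ²/(8ρ²)`. -/
noncomputable def weightR2p (θ σ t₀ t₁ : ℂ) (ρ : ℂ) : ℂ :=
  4 * Complex.I + θ / ρ + 2 * Complex.I * σ / ρ ^ 2
    + Complex.I * (t₀ - t₁) / (2 * ρ ^ 2) - Complex.I * θ ^ 2 / (8 * ρ ^ 2)

/-!
With `s = 2σ − (t₀ + t₁)/2 − θ²/8` the four functions are quadratic polynomials in `1/ρ`:
`r₁ = i(−4 + θ/ρ + s/ρ²)`, `r₂ = 4 − iθ/ρ + s/ρ²`, and moreover `r₁⁺ = −r₁ − it₀/ρ²`,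
`r₂⁺ = ir₂ + it₀/ρ²`. Hence the numerator `N` and the denominator `D` of the ratio satisfy
`N + D = r₁'r₂ − r₂'r₁ − it₀ρ⁻²(r₁ + r₂) = −4(1+i)(θ+t₀)ρ⁻² + O(ρ⁻³)`, while
`D = 16 − 16i + O(ρ⁻¹)`, so that `N/D = −1 + (N + D)/D = −1 − i(t₀+θ)/(4ρ²) + O(ρ⁻³)`.
-/

open Topology Bornology

section QuotientExpansion

variable {α 𝕜 : Type*} [NormedField 𝕜] {l : Filter α} {u f g : α → 𝕜} {a b c : 𝕜}

theorem isBigO_pow_mul_comp {P : 𝕜 → 𝕜} (hP : Continuous P) (hu : Tendsto u l (𝓝 0))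
    (n : ℕ) : (fun x => u x ^ n * P (u x)) =O[l] fun x => u x ^ n := by
  simpa using (isBigO_refl (fun x => u x ^ n) l).mul
    (((hP.tendsto 0).comp hu).isBigO_one 𝕜)

theorem isBigO_div_sub_of_isBigO {m : ℕ} (hu : Tendsto u l (𝓝 0)) (hc : c ≠ 0)
    (hf : (fun x => f x - (b * g x + a * c * u x ^ m)) =O[l] fun x => u x ^ (m + 1))
    (hg : (fun x => g x - c) =O[l] u) :
    (fun x => f x / g x - (b + a * u x ^ m)) =O[l] fun x => u x ^ (m + 1) := by
  have hg_lim : Tendsto g l (𝓝 c) := by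
    simpa using (hg.trans_tendsto hu).add_const c
  have hg_inv : (fun x => (g x)⁻¹) =O[l] fun _ => (1 : 𝕜) := (hg_lim.inv₀ hc).isBigO_one 𝕜
  have hcorr : (fun x => a * u x ^ m * (g x - c)) =O[l] fun x => u x ^ (m + 1) := by
    simpa [pow_succ, mul_assoc] using
      ((isBigO_refl (fun x => u x ^ m) l).mul hg).const_mul_left a
  refine ((hf.sub hcorr).mul hg_inv).congr' ?_ (by simp)
  filter_upwards [hg_lim.eventually_ne hc] with x hx
  field_simp
  ring

end QuotientExpansion

theorem hasDerivAt_add_mul_inv_add_mul_inv_sq {𝕜 : Type*} [NontriviallyNormedField 𝕜]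
    (a b c : 𝕜) {x : 𝕜} (hx : x ≠ 0) :
    HasDerivAt (fun y => a + b * y⁻¹ + c * y⁻¹ ^ 2) (-x⁻¹ ^ 2 * (b + 2 * c * x⁻¹)) x := by
  have hinv := hasDerivAt_inv hx
  refine (((hinv.const_mul b).const_add a).fun_add ((hinv.fun_pow 2).const_mul c)).congr_deriv ?_
  norm_num
  ring

section Weights

variable (θ σ t₀ t₁ : ℂ)

noncomputable def weightQuadCoeff : ℂ := 2 * σ - (t₀ + t₁) / 2 - θ ^ 2 / 8

noncomputable def weightNum (ρ : ℂ) : ℂ :=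
  weightR1p θ σ t₀ t₁ ρ * weightR2 θ σ t₀ t₁ ρ - weightR2p θ σ t₀ t₁ ρ * weightR1 θ σ t₀ t₁ ρ

noncomputable def weightDen (ρ : ℂ) : ℂ :=
  deriv (weightR1 θ σ t₀ t₁) ρ * weightR2 θ σ t₀ t₁ ρ
    - deriv (weightR2 θ σ t₀ t₁) ρ * weightR1 θ σ t₀ t₁ ρ
    + (1 + I) * (weightR1 θ σ t₀ t₁ ρ * weightR2 θ σ t₀ t₁ ρ)

local notation "s" => weightQuadCoeff θ σ t₀ t₁

theorem weightR1_eq :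
    weightR1 θ σ t₀ t₁ = fun ρ => -4 * I + I * θ * ρ⁻¹ + I * s * ρ⁻¹ ^ 2 := by
  ext ρ
  simp only [weightR1, weightQuadCoeff]
  ring

theorem weightR2_eq :
    weightR2 θ σ t₀ t₁ = fun ρ => 4 + -I * θ * ρ⁻¹ + s * ρ⁻¹ ^ 2 := by
  ext ρ
  simp only [weightR2, weightQuadCoeff]
  ring

theorem weightR1p_eq (ρ : ℂ) :
    weightR1p θ σ t₀ t₁ ρ = -weightR1 θ σ t₀ t₁ ρ - I * t₀ * ρ⁻¹ ^ 2 := by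
  simp only [weightR1p, weightR1]
  ring

theorem weightR2p_eq (ρ : ℂ) :
    weightR2p θ σ t₀ t₁ ρ = I * weightR2 θ σ t₀ t₁ ρ + I * t₀ * ρ⁻¹ ^ 2 := by
  simp only [weightR2p, weightR2]
  linear_combination θ * ρ⁻¹ * I_sq

variable {θ σ t₀ t₁} {ρ : ℂ}

theorem deriv_weightR1 (hρ : ρ ≠ 0) :
    deriv (weightR1 θ σ t₀ t₁) ρ = -ρ⁻¹ ^ 2 * (I * θ + 2 * (I * s) * ρ⁻¹) := by
  rw [weightR1_eq]
  exact (hasDerivAt_add_mul_inv_add_mul_inv_sq _ _ _ hρ).deriv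

theorem deriv_weightR2 (hρ : ρ ≠ 0) :
    deriv (weightR2 θ σ t₀ t₁) ρ = -ρ⁻¹ ^ 2 * (-I * θ + 2 * s * ρ⁻¹) := by
  rw [weightR2_eq]
  exact (hasDerivAt_add_mul_inv_add_mul_inv_sq _ _ _ hρ).deriv

variable (θ σ t₀ t₁)

theorem weightNum_add_weightDen (hρ : ρ ≠ 0) :
    weightNum θ σ t₀ t₁ ρ + weightDen θ σ t₀ t₁ ρ
      = -4 * (1 + I) * (θ + t₀) * ρ⁻¹ ^ 2
        + ρ⁻¹ ^ 3 * (s * (-16 * I + (1 - I) * (t₀ - θ) * ρ⁻¹)) := by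
  rw [weightNum, weightDen, weightR1p_eq, weightR2p_eq, deriv_weightR1 hρ, deriv_weightR2 hρ,
    weightR1_eq, weightR2_eq]
  grind [I_sq]

theorem weightDen_sub (hρ : ρ ≠ 0) :
    weightDen θ σ t₀ t₁ ρ - (16 - 16 * I)
      = ρ⁻¹ * (-8 * θ + (1 + I) * (θ ^ 2 - 4 * θ) * ρ⁻¹ + 2 * I * (θ - 8) * s * ρ⁻¹ ^ 2
        + (I - 1) * (s + θ) * s * ρ⁻¹ ^ 3) := by
  rw [weightDen, deriv_weightR1 hρ, deriv_weightR2 hρ, weightR1_eq, weightR2_eq]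
  grind [I_sq]

theorem isBigO_weightNum_add_weightDen :
    (fun ρ => weightNum θ σ t₀ t₁ ρ
        - (-1 * weightDen θ σ t₀ t₁ ρ + -I * (t₀ + θ) / 4 * (16 - 16 * I) * ρ⁻¹ ^ 2))
      =O[cobounded ℂ] fun ρ => ρ⁻¹ ^ (2 + 1) := by
  refine (isBigO_pow_mul_comp (P := fun w => s * (-16 * I + (1 - I) * (t₀ - θ) * w))
    (by fun_prop) tendsto_inv₀_cobounded 3).congr' ?_ EventuallyEq.rfl
  filter_upwards [eventually_ne_cobounded 0] with ρ hρ
  linear_combination -weightNum_add_weightDen θ σ t₀ t₁ hρ + 4 * (t₀ + θ) * ρ⁻¹ ^ 2 * I_sq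

theorem isBigO_weightDen_sub :
    (fun ρ => weightDen θ σ t₀ t₁ ρ - (16 - 16 * I)) =O[cobounded ℂ] fun ρ => ρ⁻¹ := by
  refine (isBigO_pow_mul_comp (P := fun w => -8 * θ + (1 + I) * (θ ^ 2 - 4 * θ) * w
      + 2 * I * (θ - 8) * s * w ^ 2 + (I - 1) * (s + θ) * s * w ^ 3)
    (by fun_prop) tendsto_inv₀_cobounded 1).congr' ?_ (by simp)
  filter_upwards [eventually_ne_cobounded 0] with ρ hρ
  rw [pow_one]
  exact (weightDen_sub θ σ t₀ t₁ hρ).symm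

end Weights

/-- As `|ρ| → ∞`,
`(r₁⁺r₂ − r₂⁺r₁)/(r₁'r₂ − r₂'r₁ + (1+i)r₁r₂) − (−1 − i(t₀+θ)/(4ρ²)) = O(ρ⁻³)`,
where primes denote `d/dρ`. -/
theorem weight_ratio_asymptotics (θ σ t₀ t₁ : ℂ) :
    (fun ρ : ℂ =>
        (weightR1p θ σ t₀ t₁ ρ * weightR2 θ σ t₀ t₁ ρ
            - weightR2p θ σ t₀ t₁ ρ * weightR1 θ σ t₀ t₁ ρ) /
          (deriv (weightR1 θ σ t₀ t₁) ρ * weightR2 θ σ t₀ t₁ ρ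
            - deriv (weightR2 θ σ t₀ t₁) ρ * weightR1 θ σ t₀ t₁ ρ
            + (1 + Complex.I) * (weightR1 θ σ t₀ t₁ ρ * weightR2 θ σ t₀ t₁ ρ)) -
        (-1 - Complex.I * (t₀ + θ) / (4 * ρ ^ 2))) =O[Filter.comap (fun z : ℂ => ‖z‖) Filter.atTop]
      fun ρ : ℂ => (ρ ^ 3)⁻¹ := by
  rw [show comap (fun z : ℂ => ‖z‖) atTop = cobounded ℂ from comap_norm_atTop]
  have hc : (16 - 16 * I : ℂ) ≠ 0 := by
    simp [Complex.ext_iff]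
  refine (isBigO_div_sub_of_isBigO tendsto_inv₀_cobounded hc
    (isBigO_weightNum_add_weightDen θ σ t₀ t₁) (isBigO_weightDen_sub θ σ t₀ t₁)).congr
    (fun ρ => ?_) (fun ρ => ?_)
  · simp only [weightNum, weightDen]
    ring
  · simp
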